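/- Let f^N be defined by its Fourier transform f̂^N(ξ) = (δ/√N) Σ_{j=N}^{2N} [χ(ξ − 2^j e⃗) + χ(ξ + 2^j e⃗)], where χ is a smooth cutoff equal to 1 on |ξ| ≤ 1/4 and 0 on |ξ| ≥ 1/2, and e⃗ = (1,…,1). Then for 1 ≤ q ≤ ∞, ‖f^N‖_{FḂ⁰₁,q} ≤ C δ N^{1/q − 1/2}; in particular ‖f^N‖_{FḂ⁰₁,₂} ≤ Cδ and ‖f^N‖_{B⁰_{∞,q}} → 0 as N → ∞ when q > 2. -/

import Mathlib

open MeasureTheory Filter Complex RealInnerProductSpace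
open scoped ENNReal

noncomputable section

/-- `L¹` norm (in `ℝ≥0∞`) of the `j`-th homogeneous Littlewood–Paley block on the
frequency side. -/
def blockL1 (d : ℕ) (φ : EuclideanSpace ℝ (Fin d) → ℝ) (j : ℤ)
    (U : EuclideanSpace ℝ (Fin d) → ℝ) : ℝ≥0∞ :=
  ∫⁻ ξ, ENNReal.ofReal |φ ((2:ℝ)^(-j) • ξ) * U ξ|

/-- The homogeneous Fourier–Besov norm `‖·‖_{FḂ⁰_{1,q}}` computed on the frequency
side from `U = û`. -/
def FB0norm (d : ℕ) (φ : EuclideanSpace ℝ (Fin d) → ℝ) (q : ℝ)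
    (U : EuclideanSpace ℝ (Fin d) → ℝ) : ℝ≥0∞ :=
  (∑' j : ℤ, (blockL1 d φ j U) ^ q) ^ (1/q)

/-- `L^∞` norm (in `ℝ≥0∞`) of the `j`-th Littlewood–Paley block in physical space
(sup of the inverse Fourier integral of `φ(2^{-j}·) U`). -/
def blockSup (d : ℕ) (φ : EuclideanSpace ℝ (Fin d) → ℝ) (j : ℤ)
    (U : EuclideanSpace ℝ (Fin d) → ℝ) : ℝ≥0∞ :=
  ⨆ x : EuclideanSpace ℝ (Fin d),
    (‖∫ ξ, Complex.exp (Complex.I * ((⟪x, ξ⟫ : ℝ) : ℂ)) *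
        ((φ ((2:ℝ)^(-j) • ξ) * U ξ : ℝ) : ℂ)‖₊ : ℝ≥0∞)

/-- Besov-type `B⁰_{∞,q}` norm over high-frequency blocks, in `ℝ≥0∞`. -/
def Bsupnorm (d : ℕ) (φ : EuclideanSpace ℝ (Fin d) → ℝ) (q : ℝ)
    (U : EuclideanSpace ℝ (Fin d) → ℝ) : ℝ≥0∞ :=
  (∑' j : ℤ, (blockSup d φ j U) ^ q) ^ (1/q)

/-- The initial data `f^N`, given by its Fourier transform
`f̂^N(ξ) = (δ/√N) Σ_{j=N}^{2N} [χ(ξ − 2^j e⃗) + χ(ξ + 2^j e⃗)]`. -/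
def fNhat (d : ℕ) (χ : EuclideanSpace ℝ (Fin d) → ℝ) (e : EuclideanSpace ℝ (Fin d))
    (δ : ℝ) (N : ℕ) (ξ : EuclideanSpace ℝ (Fin d)) : ℝ :=
  (δ / Real.sqrt N) *
    ∑ j ∈ Finset.Icc N (2*N), (χ (ξ - (2:ℝ)^j • e) + χ (ξ + (2:ℝ)^j • e))

/-! The bump `χ(· ∓ 2^j e)` lives where `‖ξ‖` is within `1/2` of `2^j √d`, so it meets the
`k`-th Littlewood–Paley annulus only when `2^k ≍ 2^j √d`. Hence each block of `f̂^N` meets at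
most three bumps and has `L¹` norm at most `6 (δ/√N) ‖χ‖_{L¹}`, and only the `N + d + 2` blocks
with `N - 1 ≤ k ≤ 2N + d` are nonzero, which gives `‖f^N‖_{FḂ⁰_{1,q}} ≲ (N + d + 2)^{1/q} δ/√N`.
The `B⁰_{∞,q}` blocks are dominated by the `FḂ⁰_{1,q}` blocks because `|∫ e^{i⟪x,ξ⟫} g| ≤ ‖g‖_{L¹}`.
-/

open Finset in
theorem Finset.card_le_of_forall_lt_add {s : Finset ℕ} {n : ℕ}
    (h : ∀ a ∈ s, ∀ b ∈ s, a < b + n) : #s ≤ n := by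
  rcases s.eq_empty_or_nonempty with rfl | hs
  · simp
  · calc #s ≤ #(Ico (s.min' hs) (s.min' hs + n)) :=
          card_le_card fun a ha => mem_Ico.2 ⟨min'_le s a ha, h a ha _ (min'_mem s hs)⟩
      _ = n := by simp

theorem lt_add_three_of_dyadic {k : ℤ} {j j' : ℕ} {s : ℝ} (hs : 0 < s)
    (h : 2 ^ j * s ≤ 32 / 9 * 2 ^ k) (h' : 3 / 5 * 2 ^ k ≤ 2 ^ j' * s) : j < j' + 3 := by
  have : (2:ℝ) ^ j < 2 ^ (j' + 3) := by
    rw [pow_add]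
    nlinarith [zpow_pos (two_pos (α := ℝ)) k, pow_pos (two_pos (α := ℝ)) j']
  exact (pow_lt_pow_iff_right₀ one_lt_two).1 this

theorem mem_Ioc_of_dyadic {d : ℕ} (hd : 1 ≤ d) {k : ℤ} {j : ℕ}
    (h : 3 / 5 * 2 ^ k ≤ 2 ^ j * √d ∧ 2 ^ j * √d ≤ 32 / 9 * 2 ^ k) :
    k ∈ Set.Ioc ((j : ℤ) - 2) (j + d) := by
  have h2k : (0:ℝ) < 2 ^ k := zpow_pos two_pos k
  have hsd : 1 ≤ √(d:ℝ) ∧ √(d:ℝ) ≤ 2 ^ d := by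
    have hd2 : (d:ℝ) < 2 ^ d := by exact_mod_cast Nat.lt_two_pow_self
    refine ⟨Real.one_le_sqrt.2 (by exact_mod_cast hd), (Real.sqrt_le_left (by positivity)).2 ?_⟩
    nlinarith [one_le_pow₀ (M₀ := ℝ) one_le_two (n := d)]
  rw [Set.mem_Ioc, sub_lt_iff_lt_add]
  constructor
  · rw [← zpow_lt_zpow_iff_right₀ (one_lt_two (α := ℝ)), zpow_add₀ two_ne_zero, zpow_natCast]
    nlinarith [pow_pos (two_pos (α := ℝ)) j]
  · rw [← Int.lt_add_one_iff, ← zpow_lt_zpow_iff_right₀ (one_lt_two (α := ℝ)),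
      zpow_add₀ two_ne_zero, zpow_add₀ two_ne_zero, zpow_natCast, zpow_natCast]
    nlinarith [pow_pos (two_pos (α := ℝ)) j]

section Bumps

open Finset

variable {d : ℕ} {φ χ : EuclideanSpace ℝ (Fin d) → ℝ}

def BlockMeetsBump (φ χ : EuclideanSpace ℝ (Fin d) → ℝ) (k : ℤ)
    (a : EuclideanSpace ℝ (Fin d)) : Prop :=
  ∃ ξ, φ ((2:ℝ) ^ (-k) • ξ) ≠ 0 ∧ (χ (ξ - a) ≠ 0 ∨ χ (ξ + a) ≠ 0)

theorem BlockMeetsBump.norm_bounds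
    (hφ_supp : Function.support φ ⊆
      {ξ : EuclideanSpace ℝ (Fin d) | 3/4 ≤ ‖ξ‖ ∧ ‖ξ‖ ≤ 8/3})
    (hχ_supp : Function.support χ ⊆ Metric.closedBall 0 (1/2))
    {k : ℤ} {a : EuclideanSpace ℝ (Fin d)} (h : BlockMeetsBump φ χ k a) :
    3/4 * 2 ^ k ≤ ‖a‖ + 1/2 ∧ ‖a‖ ≤ 8/3 * 2 ^ k + 1/2 := by
  obtain ⟨ξ, hφ, hχ⟩ := h
  have h2k : (0:ℝ) < 2 ^ k := zpow_pos two_pos k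
  obtain ⟨hξ₁, hξ₂⟩ := hφ_supp hφ
  rw [norm_smul, zpow_neg, Real.norm_of_nonneg (inv_nonneg.2 h2k.le), inv_mul_eq_div] at hξ₁ hξ₂
  rw [le_div_iff₀ h2k] at hξ₁
  rw [div_le_iff₀ h2k] at hξ₂
  obtain ⟨b, hb, hξb⟩ : ∃ b : EuclideanSpace ℝ (Fin d), ‖b‖ = ‖a‖ ∧ ‖ξ - b‖ ≤ 1/2 := by
    rcases hχ with hχ | hχ
    · exact ⟨a, rfl, mem_closedBall_zero_iff.1 (hχ_supp hχ)⟩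
    · exact ⟨-a, norm_neg a, by simpa using mem_closedBall_zero_iff.1 (hχ_supp hχ)⟩
  have := norm_sub_norm_le ξ b
  have := norm_sub_norm_le b ξ
  rw [norm_sub_rev] at this
  constructor <;> linarith

theorem norm_two_pow_smul_of_forall_eq_one {e : EuclideanSpace ℝ (Fin d)} (he : ∀ i, e i = 1)
    (j : ℕ) : ‖(2:ℝ) ^ j • e‖ = 2 ^ j * √d := by
  simp [norm_smul, EuclideanSpace.norm_eq, he]

theorem BlockMeetsBump.dyadic_bounds (hd : 1 ≤ d)
    (hφ_supp : Function.support φ ⊆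
      {ξ : EuclideanSpace ℝ (Fin d) | 3/4 ≤ ‖ξ‖ ∧ ‖ξ‖ ≤ 8/3})
    (hχ_supp : Function.support χ ⊆ Metric.closedBall 0 (1/2))
    {e : EuclideanSpace ℝ (Fin d)} (he : ∀ i, e i = 1) {k : ℤ} {j : ℕ} (hj : 1 ≤ j)
    (h : BlockMeetsBump φ χ k ((2:ℝ) ^ j • e)) :
    3/5 * 2 ^ k ≤ 2 ^ j * √d ∧ 2 ^ j * √d ≤ 32/9 * 2 ^ k := by
  have hbounds := h.norm_bounds hφ_supp hχ_supp
  rw [norm_two_pow_smul_of_forall_eq_one he] at hbounds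
  -- the bump centres have norm at least `2`, which absorbs the radius `1/2` of the bumps
  have hr : 2 ≤ (2:ℝ) ^ j * √d := by
    have := pow_le_pow_right₀ (one_le_two (α := ℝ)) hj
    have := Real.one_le_sqrt.2 (show (1:ℝ) ≤ d by exact_mod_cast hd)
    nlinarith
  constructor <;> linarith

open scoped Classical in
theorem blockL1_bumps_le (hφ : ∀ ξ, φ ξ ∈ Set.Icc (0:ℝ) 1) (hχ : Measurable χ) (c : ℝ)
    (a : ℕ → EuclideanSpace ℝ (Fin d)) (J : Finset ℕ) (k : ℤ) :
    blockL1 d φ k (fun ξ => c * ∑ j ∈ J, (χ (ξ - a j) + χ (ξ + a j))) ≤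
      ‖c‖ₑ * #{j ∈ J | BlockMeetsBump φ χ k (a j)} * (2 * ∫⁻ ξ, ‖χ ξ‖ₑ) := by
  set J' := {j ∈ J | BlockMeetsBump φ χ k (a j)}
  have hpt : ∀ ξ, ENNReal.ofReal
      |φ ((2:ℝ) ^ (-k) • ξ) * (c * ∑ j ∈ J, (χ (ξ - a j) + χ (ξ + a j)))| ≤
      ‖c‖ₑ * ∑ j ∈ J', (‖χ (ξ - a j)‖ₑ + ‖χ (ξ + a j)‖ₑ) := by
    intro ξ
    have hφ₁ : ‖φ ((2:ℝ) ^ (-k) • ξ)‖ₑ ≤ 1 := by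
      rw [Real.enorm_of_nonneg (hφ _).1]
      exact ENNReal.ofReal_le_one.2 (hφ _).2
    have hsupp : ∑ j ∈ J', φ ((2:ℝ) ^ (-k) • ξ) * (χ (ξ - a j) + χ (ξ + a j)) =
        ∑ j ∈ J, φ ((2:ℝ) ^ (-k) • ξ) * (χ (ξ - a j) + χ (ξ + a j)) := by
      refine sum_filter_of_ne fun j _ hj => ⟨ξ, left_ne_zero_of_mul hj, ?_⟩
      by_contra! h
      simp [h] at hj
    rw [← Real.enorm_eq_ofReal_abs, mul_left_comm, mul_sum, ← hsupp, enorm_mul]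
    gcongr
    refine (enorm_sum_le _ _).trans (sum_le_sum fun j _ => ?_)
    rw [enorm_mul]
    calc ‖φ ((2:ℝ) ^ (-k) • ξ)‖ₑ * ‖χ (ξ - a j) + χ (ξ + a j)‖ₑ
        ≤ 1 * (‖χ (ξ - a j)‖ₑ + ‖χ (ξ + a j)‖ₑ) := mul_le_mul' hφ₁ (enorm_add_le _ _)
      _ = ‖χ (ξ - a j)‖ₑ + ‖χ (ξ + a j)‖ₑ := one_mul _
  have hmeas : ∀ j, Measurable fun ξ => ‖χ (ξ - a j)‖ₑ + ‖χ (ξ + a j)‖ₑ := fun j =>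
    (hχ.comp (measurable_sub_const _)).enorm.add (hχ.comp (measurable_add_const _)).enorm
  calc blockL1 d φ k (fun ξ => c * ∑ j ∈ J, (χ (ξ - a j) + χ (ξ + a j)))
      ≤ ∫⁻ ξ, ‖c‖ₑ * ∑ j ∈ J', (‖χ (ξ - a j)‖ₑ + ‖χ (ξ + a j)‖ₑ) := lintegral_mono hpt
    _ = ‖c‖ₑ * ∑ j ∈ J', ((∫⁻ ξ, ‖χ (ξ - a j)‖ₑ) + ∫⁻ ξ, ‖χ (ξ + a j)‖ₑ) := by
      rw [lintegral_const_mul _ (Finset.measurable_sum _ fun j _ => hmeas j),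
        lintegral_finsetSum _ fun j _ => hmeas j]
      exact congrArg _ (sum_congr rfl fun j _ =>
        lintegral_add_left (hχ.comp (measurable_sub_const _)).enorm _)
    _ = ‖c‖ₑ * #J' * (2 * ∫⁻ ξ, ‖χ ξ‖ₑ) := by
      simp only [lintegral_sub_right_eq_self (fun ξ => ‖χ ξ‖ₑ),
        lintegral_add_right_eq_self (fun ξ => ‖χ ξ‖ₑ), sum_const, nsmul_eq_mul, two_mul]
      ring

open scoped Classical in
theorem card_filter_blockMeetsBump_le_three (hd : 1 ≤ d)
    (hφ_supp : Function.support φ ⊆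
      {ξ : EuclideanSpace ℝ (Fin d) | 3/4 ≤ ‖ξ‖ ∧ ‖ξ‖ ≤ 8/3})
    (hχ_supp : Function.support χ ⊆ Metric.closedBall 0 (1/2))
    {e : EuclideanSpace ℝ (Fin d)} (he : ∀ i, e i = 1) {N : ℕ} (hN : 1 ≤ N) (k : ℤ) :
    #{j ∈ Icc N (2 * N) | BlockMeetsBump φ χ k ((2:ℝ) ^ j • e)} ≤ 3 := by
  refine card_le_of_forall_lt_add fun j hj j' hj' => ?_
  simp only [mem_filter, mem_Icc] at hj hj'
  exact lt_add_three_of_dyadic (Real.sqrt_pos.2 (by exact_mod_cast hd))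
    (hj.2.dyadic_bounds hd hφ_supp hχ_supp he (hN.trans hj.1.1)).2
    (hj'.2.dyadic_bounds hd hφ_supp hχ_supp he (hN.trans hj'.1.1)).1

open scoped Classical in
theorem filter_blockMeetsBump_eq_empty (hd : 1 ≤ d)
    (hφ_supp : Function.support φ ⊆
      {ξ : EuclideanSpace ℝ (Fin d) | 3/4 ≤ ‖ξ‖ ∧ ‖ξ‖ ≤ 8/3})
    (hχ_supp : Function.support χ ⊆ Metric.closedBall 0 (1/2))
    {e : EuclideanSpace ℝ (Fin d)} (he : ∀ i, e i = 1) {N : ℕ} (hN : 1 ≤ N) {k : ℤ}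
    (hk : k ∉ Icc ((N:ℤ) - 1) (2 * N + d)) :
    {j ∈ Icc N (2 * N) | BlockMeetsBump φ χ k ((2:ℝ) ^ j • e)} = ∅ := by
  refine filter_false_of_mem fun j hj hjk => hk ?_
  rw [mem_Icc] at hj ⊢
  obtain ⟨hjk₁, hjk₂⟩ :=
    mem_Ioc_of_dyadic hd (hjk.dyadic_bounds hd hφ_supp hχ_supp he (hN.trans hj.1))
  omega

end Bumps

theorem tsum_rpow_rpow_le_of_support_subset {ι : Type*} {b : ι → ℝ≥0∞} {S : Finset ι}
    (hS : ∀ k ∉ S, b k = 0) {A : ℝ≥0∞} (hA : ∀ k, b k ≤ A) {q : ℝ} (hq : 0 < q) :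
    (∑' k, b k ^ q) ^ (1/q) ≤ (S.card : ℝ≥0∞) ^ (1/q) * A := by
  rw [tsum_eq_sum fun k hk => by rw [hS k hk, ENNReal.zero_rpow_of_pos hq]]
  calc (∑ k ∈ S, b k ^ q) ^ (1/q) ≤ (S.card * A ^ q) ^ (1/q) := by
        gcongr
        simpa using Finset.sum_le_sum fun k (_ : k ∈ S) => ENNReal.rpow_le_rpow (hA k) hq.le
    _ = (S.card : ℝ≥0∞) ^ (1/q) * A := by
        rw [ENNReal.mul_rpow_of_nonneg _ _ (by positivity), ← ENNReal.rpow_mul,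
          mul_one_div_cancel hq.ne', ENNReal.rpow_one]

theorem card_rpow_mul_div_sqrt_le (d : ℕ) {q δ : ℝ} (hq : 1 ≤ q) (hδ : 0 ≤ δ) {N : ℕ}
    (hN : 1 ≤ N) :
    ((N + d + 2 : ℕ) : ℝ) ^ (1/q) * (δ / √N) ≤ (d + 3) * δ * (N : ℝ) ^ (1/q - 1/2) := by
  have hN' : (1:ℝ) ≤ N := by exact_mod_cast hN
  have hq' : 0 ≤ 1/q := by positivity
  have hcard : ((N + d + 2 : ℕ) : ℝ) ≤ (d + 3) * N := by push_cast; nlinarith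
  calc ((N + d + 2 : ℕ) : ℝ) ^ (1/q) * (δ / √N)
      ≤ (d + 3) ^ (1/q) * (N : ℝ) ^ (1/q) * (δ / √N) := by
        rw [← Real.mul_rpow (by positivity) (by positivity)]
        gcongr
    _ ≤ (d + 3) * (N : ℝ) ^ (1/q) * (δ / √N) := by
        gcongr
        exact Real.rpow_le_self_of_one_le (by linarith) ((div_le_one (by linarith)).2 hq)
    _ = (d + 3) * δ * (N : ℝ) ^ (1/q - 1/2) := by
        rw [Real.sqrt_eq_rpow, Real.rpow_sub (by linarith)]
        ring

theorem blockSup_le_blockL1 (d : ℕ) (φ : EuclideanSpace ℝ (Fin d) → ℝ) (k : ℤ)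
    (U : EuclideanSpace ℝ (Fin d) → ℝ) : blockSup d φ k U ≤ blockL1 d φ k U := by
  refine iSup_le fun x => (enorm_integral_le_lintegral_enorm _).trans_eq ?_
  refine lintegral_congr fun ξ => ?_
  rw [enorm_mul, Complex.enorm_exp_I_mul_ofReal, one_mul, ← enorm_norm, Complex.norm_real,
    enorm_norm, Real.enorm_eq_ofReal_abs]

theorem Bsupnorm_le_FB0norm (d : ℕ) (φ : EuclideanSpace ℝ (Fin d) → ℝ) {q : ℝ} (hq : 0 < q)
    (U : EuclideanSpace ℝ (Fin d) → ℝ) : Bsupnorm d φ q U ≤ FB0norm d φ q U := by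
  unfold Bsupnorm FB0norm
  gcongr with k
  exact blockSup_le_blockL1 d φ k U

theorem FB0norm_fNhat_le {d : ℕ} (hd : 1 ≤ d) {φ χ : EuclideanSpace ℝ (Fin d) → ℝ}
    (hφ_range : ∀ ξ, φ ξ ∈ Set.Icc (0:ℝ) 1)
    (hφ_supp : Function.support φ ⊆
      {ξ : EuclideanSpace ℝ (Fin d) | 3/4 ≤ ‖ξ‖ ∧ ‖ξ‖ ≤ 8/3})
    (hχ : Measurable χ) (hχ_supp : Function.support χ ⊆ Metric.closedBall 0 (1/2))
    {I : ℝ} (hI₀ : 0 ≤ I) (hI : ∫⁻ ξ, ‖χ ξ‖ₑ ≤ ENNReal.ofReal I)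
    {e : EuclideanSpace ℝ (Fin d)} (he : ∀ i, e i = 1)
    {δ : ℝ} (hδ : 0 ≤ δ) {q : ℝ} (hq : 1 ≤ q) {N : ℕ} (hN : 1 ≤ N) :
    FB0norm d φ q (fNhat d χ e δ N) ≤
      ENNReal.ofReal (6 * (d + 3) * I * δ * (N : ℝ) ^ (1/q - 1/2)) := by
  have hc : 0 ≤ δ / √N := by positivity
  have hblock := fun k => blockL1_bumps_le hφ_range hχ (δ / √N)
    (fun j : ℕ => (2:ℝ) ^ j • e) (Finset.Icc N (2 * N)) k
  have hbound : ∀ k, blockL1 d φ k (fNhat d χ e δ N) ≤ ENNReal.ofReal (δ / √N * 6 * I) := by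
    intro k
    refine (hblock k).trans ?_
    calc _ ≤ ENNReal.ofReal (δ / √N) * 3 * (2 * ENNReal.ofReal I) := by
          rw [Real.enorm_of_nonneg hc]
          gcongr
          exact_mod_cast card_filter_blockMeetsBump_le_three hd hφ_supp hχ_supp he hN k
      _ = ENNReal.ofReal (δ / √N * 6 * I) := by
          rw [ENNReal.ofReal_mul (by positivity), ENNReal.ofReal_mul hc, ENNReal.ofReal_ofNat]
          ring
  have hzero : ∀ k ∉ Finset.Icc ((N:ℤ) - 1) (2 * N + d), blockL1 d φ k (fNhat d χ e δ N) = 0 :=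
    fun k hk => le_zero_iff.1 <| (hblock k).trans_eq <| by
      rw [filter_blockMeetsBump_eq_empty hd hφ_supp hχ_supp he hN hk]; simp
  have hcard : (Finset.Icc ((N:ℤ) - 1) (2 * N + d)).card = N + d + 2 := by
    rw [Int.card_Icc]; omega
  refine (tsum_rpow_rpow_le_of_support_subset hzero hbound (by linarith)).trans ?_
  rw [hcard, ← ENNReal.ofReal_natCast,
    ENNReal.ofReal_rpow_of_nonneg (by positivity) (by positivity),
    ← ENNReal.ofReal_mul (by positivity)]
  refine ENNReal.ofReal_le_ofReal ?_
  have := mul_le_mul_of_nonneg_right (card_rpow_mul_div_sqrt_le d hq hδ hN)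
    (by positivity : 0 ≤ 6 * I)
  linarith

theorem stmt7_general (d : ℕ) (hd : 1 ≤ d)
    (φ : EuclideanSpace ℝ (Fin d) → ℝ)
    (hφ_range : ∀ ξ, φ ξ ∈ Set.Icc (0:ℝ) 1)
    (hφ_supp : Function.support φ ⊆
      {ξ : EuclideanSpace ℝ (Fin d) | 3/4 ≤ ‖ξ‖ ∧ ‖ξ‖ ≤ 8/3})
    (χ : EuclideanSpace ℝ (Fin d) → ℝ) (hχ_cont : Continuous χ)
    (hχ_supp : Function.support χ ⊆ Metric.closedBall 0 (1/2))
    (e : EuclideanSpace ℝ (Fin d)) (he : ∀ i, e i = 1) :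
    ∃ C : ℝ, 0 < C ∧ ∀ (δ : ℝ), 0 < δ →
      (∀ (q : ℝ), 1 ≤ q → ∀ (N : ℕ), 1 ≤ N →
        FB0norm d φ q (fNhat d χ e δ N) ≤
          ENNReal.ofReal (C * δ * (N:ℝ) ^ (1/q - 1/2))) ∧
      (∀ (N : ℕ), 1 ≤ N →
        FB0norm d φ 2 (fNhat d χ e δ N) ≤ ENNReal.ofReal (C * δ)) ∧
      (∀ (q : ℝ), 2 < q →
        Tendsto (fun N : ℕ => Bsupnorm d φ q (fNhat d χ e δ N)) atTop (nhds 0)) := by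
  have hχ_L1 : ∫⁻ ξ, ‖χ ξ‖ₑ ≠ ⊤ := (hχ_cont.integrable_of_hasCompactSupport
    (.of_support_subset_isCompact (isCompact_closedBall _ _) hχ_supp)).hasFiniteIntegral.ne
  set I := (∫⁻ ξ, ‖χ ξ‖ₑ).toReal + 1
  have hI : ∫⁻ ξ, ‖χ ξ‖ₑ ≤ ENNReal.ofReal I :=
    (ENNReal.le_ofReal_iff_toReal_le hχ_L1 (by positivity)).2 (le_add_of_nonneg_right zero_le_one)
  refine ⟨6 * (d + 3) * I, by positivity, fun δ hδ => ?_⟩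
  have hFB : ∀ q : ℝ, 1 ≤ q → ∀ N : ℕ, 1 ≤ N → FB0norm d φ q (fNhat d χ e δ N) ≤
      ENNReal.ofReal (6 * (d + 3) * I * δ * (N : ℝ) ^ (1/q - 1/2)) := fun q hq N hN =>
    FB0norm_fNhat_le hd hφ_range hφ_supp hχ_cont.measurable hχ_supp (by positivity) hI he hδ.le
      hq hN
  refine ⟨hFB, fun N hN => by simpa using hFB 2 one_le_two N hN, fun q hq => ?_⟩
  have hexp : 1/q - 1/2 < 0 := by
    have : 1/q < 1/2 := one_div_lt_one_div_of_lt two_pos hq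
    linarith
  have hlim : Tendsto (fun N : ℕ => ENNReal.ofReal (6 * (d + 3) * I * δ * (N : ℝ) ^ (1/q - 1/2)))
      atTop (nhds 0) := by
    simpa using ENNReal.tendsto_ofReal (((tendsto_rpow_neg_atTop (neg_pos.2 hexp)).comp
      tendsto_natCast_atTop_atTop).const_mul (6 * (d + 3) * I * δ))
  refine tendsto_of_tendsto_of_tendsto_of_le_of_le' tendsto_const_nhds hlim
    (Eventually.of_forall fun _ => zero_le) ?_
  filter_upwards [eventually_ge_atTop 1] with N hN
  exact (Bsupnorm_le_FB0norm d φ (by linarith) _).trans (hFB q (by linarith) N hN)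

/-- for `f^N` as above, `‖f^N‖_{FḂ⁰_{1,q}} ≤ C δ N^{1/q − 1/2}` for all
`1 ≤ q < ∞`; in particular `‖f^N‖_{FḂ⁰_{1,2}} ≤ C δ` and the (Fourier-side)
`B⁰_{∞,q}` norm of `f^N` tends to `0` as `N → ∞` when `q > 2`. -/
theorem stmt7 (d : ℕ) (hd : 1 ≤ d)
    (φ : EuclideanSpace ℝ (Fin d) → ℝ)
    (hφ_range : ∀ ξ, φ ξ ∈ Set.Icc (0:ℝ) 1)
    (hφ_supp : Function.support φ ⊆
      {ξ : EuclideanSpace ℝ (Fin d) | 3/4 ≤ ‖ξ‖ ∧ ‖ξ‖ ≤ 8/3})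
    (hφ_sum : ∀ ξ : EuclideanSpace ℝ (Fin d), ξ ≠ 0 →
      (∑' j : ℤ, φ ((2:ℝ)^(-j) • ξ)) = 1)
    (χ : EuclideanSpace ℝ (Fin d) → ℝ) (hχ_cont : Continuous χ)
    (hχ_range : ∀ ξ, χ ξ ∈ Set.Icc (0:ℝ) 1)
    (hχ_supp : Function.support χ ⊆ Metric.closedBall 0 (1/2))
    (e : EuclideanSpace ℝ (Fin d)) (he : ∀ i, e i = 1) :
    ∃ C : ℝ, 0 < C ∧ ∀ (δ : ℝ), 0 < δ →
      (∀ (q : ℝ), 1 ≤ q → ∀ (N : ℕ), 1 ≤ N →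
        FB0norm d φ q (fNhat d χ e δ N) ≤
          ENNReal.ofReal (C * δ * (N:ℝ) ^ (1/q - 1/2))) ∧
      (∀ (N : ℕ), 1 ≤ N →
        FB0norm d φ 2 (fNhat d χ e δ N) ≤ ENNReal.ofReal (C * δ)) ∧
      (∀ (q : ℝ), 2 < q →
        Tendsto (fun N : ℕ => Bsupnorm d φ q (fNhat d χ e δ N)) atTop (nhds 0)) :=
  stmt7_general d hd φ hφ_range hφ_supp χ hχ_cont hχ_supp e he

end
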